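/- Any function Ψ : Ã → ℂ with UΨ = Ψ is constant on the inward arcs of each tail and constant on the outward arcs of each tail: for each j there exist α_j, β_j ∈ ℂ such that Ψ(a) = α_j for every inward arc a of tail j and Ψ(a) = β_j for every outward arc a of tail j. -/

import Mathlib

open scoped BigOperators

/-- A symmetric directed graph: arcs with origin/terminus maps and an
inversion involution; every vertex has a finite nonempty set of outgoing
arcs; the graph is connected. -/
structure SymDigraph where
  V : Type
  A : Type
  o : A → V
  t : A → V
  bar : A → A
  bar_inv : Function.Involutive bar
  o_bar : ∀ a, o (bar a) = t a
  t_bar : ∀ a, t (bar a) = o a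
  out_fin : ∀ u : V, {a : A | o a = u}.Finite
  out_ne : ∀ u : V, {a : A | o a = u}.Nonempty
  connected : ∀ u v : V, Relation.ReflTransGen (fun x y => ∃ a, o a = x ∧ t a = y) u v

/-- `p` is a transition function of a random walk: `0 < p a ≤ 1` and the
outgoing probabilities at every vertex sum to `1`. -/
def IsTransition (G : SymDigraph) (p : G.A → ℝ) : Prop :=
  (∀ a, 0 < p a ∧ p a ≤ 1) ∧
  ∀ u : G.V, ∑ᶠ a ∈ {a : G.A | G.o a = u}, p a = 1

/-- The Szegedy evolution:
`(UΨ)(a) = 2√(p a) Σ_{b : t b = o a} √(p b̄) Ψ(b) − Ψ(ā)`. -/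
noncomputable def szegedy (G : SymDigraph) (p : G.A → ℝ) (Ψ : G.A → ℂ) : G.A → ℂ :=
  fun a =>
    2 * (Real.sqrt (p a) : ℂ) *
        (∑ᶠ b ∈ {b : G.A | G.t b = G.o a}, (Real.sqrt (p (G.bar b)) : ℂ) * Ψ b)
      - Ψ (G.bar a)

/-- `ρ_V(u) = Σ_{b : t b = u} √(p b̄) Ψ(b)`. -/
noncomputable def rhoV (G : SymDigraph) (p : G.A → ℝ) (Ψ : G.A → ℂ) (u : G.V) : ℂ :=
  ∑ᶠ b ∈ {b : G.A | G.t b = u}, (Real.sqrt (p (G.bar b)) : ℂ) * Ψ b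

/-- `ρ_E(|a|) = (Ψ(a) + Ψ(ā))/2`. -/
noncomputable def rhoE (G : SymDigraph) (Ψ : G.A → ℂ) (a : G.A) : ℂ :=
  (Ψ a + Ψ (G.bar a)) / 2

/-- Reversibility of `p` with reversible measure `m_V`; the detailed balance
condition `p(a) m_V(o a) = p(ā) m_V(t a)`. -/
def IsReversible (G : SymDigraph) (p : G.A → ℝ) (mV : G.V → ℝ) : Prop :=
  (∀ u, 0 < mV u) ∧ ∀ a, p a * mV (G.o a) = p (G.bar a) * mV (G.t a)

/-- The edge measure `m_E(|a|) = p(a) m_V(o a)`. -/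
def mEdge (G : SymDigraph) (p : G.A → ℝ) (mV : G.V → ℝ) (a : G.A) : ℝ :=
  p a * mV (G.o a)

/-- The tailed graph `G̃`: a finite internal graph `G0 = (V0, A0)` together
with `r ≥ 1` semi-infinite tails.  Tail `j` has vertices `tailV j 0,
tailV j 1, …` (with root `tailV j 0 = o(P_j) ∈ V0`, all other tail vertices
outside `V0`) and inward arcs `tailA j k` going from `tailV j (k+1)` to
`tailV j k`; `e_j = tailA j 0`.  Outward arcs are the `bar (tailA j k)`. -/
structure TailedGraph extends SymDigraph where
  r : ℕ
  r_pos : 0 < r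
  V0 : Set V
  A0 : Set A
  V0_fin : V0.Finite
  A0_fin : A0.Finite
  A0_bar : ∀ a ∈ A0, bar a ∈ A0
  A0_ends : ∀ a ∈ A0, o a ∈ V0 ∧ t a ∈ V0
  tailV : Fin r → ℕ → V
  tailA : Fin r → ℕ → A
  tailA_o : ∀ j k, o (tailA j k) = tailV j (k + 1)
  tailA_t : ∀ j k, t (tailA j k) = tailV j k
  tailV_root : ∀ j, tailV j 0 ∈ V0
  tailV_notin : ∀ j k, tailV j (k + 1) ∉ V0
  tailV_inj : ∀ j k j' k', tailV j (k + 1) = tailV j' (k' + 1) → j = j' ∧ k = k'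
  tailA_nin : ∀ j k, tailA j k ∉ A0
  arcs_cover : ∀ a : A, a ∈ A0 ∨ ∃ j k, a = tailA j k ∨ a = bar (tailA j k)
  verts_cover : ∀ u : V, u ∈ V0 ∨ ∃ j k, u = tailV j (k + 1)

/-- A transition function on the tailed graph: additionally `p = 1/2` on all
tail arcs except possibly the arcs leaving `o(P_j)` into tail `j`
(that is, except the `bar (tailA j 0)`). -/
def TailTransition (G : TailedGraph) (p : G.A → ℝ) : Prop :=
  IsTransition G.toSymDigraph p ∧
  (∀ j k, p (G.tailA j k) = 1 / 2) ∧
  ∀ j k, p (G.bar (G.tailA j (k + 1))) = 1 / 2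

/-- `Ψ` is a stationary state with boundary data `α β : ℂ^r`:
`UΨ = Ψ`, `Ψ = α_j` on the inward arcs of tail `j` and `Ψ = β_j` on the
outward arcs of tail `j`. -/
def IsStationaryState (G : TailedGraph) (p : G.A → ℝ) (Ψ : G.A → ℂ)
    (α β : Fin G.r → ℂ) : Prop :=
  szegedy G.toSymDigraph p Ψ = Ψ ∧
  (∀ j k, Ψ (G.tailA j k) = α j) ∧
  ∀ j k, Ψ (G.bar (G.tailA j k)) = β j

/-- `m(δG0) = Σ_{j=1}^r m_E(|e_j|)`. -/
def mDelta (G : TailedGraph) (p : G.A → ℝ) (mV : G.V → ℝ) : ℝ :=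
  ∑ j : Fin G.r, mEdge G.toSymDigraph p mV (G.tailA j 0)

/-- `⟨m_{δE}, α⟩ = Σ_{j=1}^r √(m_E(|e_j|)/m(δG0)) · α_j`. -/
noncomputable def bdryInner (G : TailedGraph) (p : G.A → ℝ) (mV : G.V → ℝ)
    (α : Fin G.r → ℂ) : ℂ :=
  ∑ j : Fin G.r,
    (Real.sqrt (mEdge G.toSymDigraph p mV (G.tailA j 0) / mDelta G p mV) : ℂ) * α j

/-- The current
`j(a) = √(m_E(|a|)) Ψ(a) − (m_E(|a|)/√(m(δG0))) ⟨m_{δE}, α⟩`. -/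
noncomputable def current (G : TailedGraph) (p : G.A → ℝ) (mV : G.V → ℝ)
    (α : Fin G.r → ℂ) (Ψ : G.A → ℂ) (a : G.A) : ℂ :=
  (Real.sqrt (mEdge G.toSymDigraph p mV a) : ℂ) * Ψ a
    - ((mEdge G.toSymDigraph p mV a : ℝ) : ℂ)
        / (Real.sqrt (mDelta G p mV) : ℂ) * bdryInner G p mV α

/-- A cycle `(a_1, …, a_s)`: consecutive arcs concatenate (cyclically) and
the `2s` arcs `a_1, …, a_s, ā_1, …, ā_s` are pairwise distinct. -/
def IsCycle (G : SymDigraph) (s : ℕ) (c : Fin s → G.A) : Prop :=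
  0 < s ∧
  (∀ k : Fin s, G.t (c k) = G.o (c ⟨(k.val + 1) % s, Nat.mod_lt _ k.pos⟩)) ∧
  Function.Injective (Sum.elim c fun k => G.bar (c k))

open Classical in
/-- The cycle vector `w_c`: `1/√(m_E(|a_k|))` at `a_k`, `−1/√(m_E(|a_k|))`
at `ā_k`, and `0` elsewhere. -/
noncomputable def cycleVec (G : SymDigraph) (mE : G.A → ℝ) {s : ℕ}
    (c : Fin s → G.A) (a : G.A) : ℂ :=
  if ∃ k, a = c k then ((1 / Real.sqrt (mE a) : ℝ) : ℂ)
  else if ∃ k, a = G.bar (c k) then ((-(1 / Real.sqrt (mE a)) : ℝ) : ℂ)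
  else 0


section aux
variable (G : TailedGraph)

lemma tail_incoming (j : Fin G.r) (k : ℕ) :
    {b : G.A | G.t b = G.tailV j (k+1)} =
      ({G.tailA j (k+1), G.bar (G.tailA j k)} : Set G.A) := by
  ext a
  constructor
  · intro h
    simp only [Set.mem_setOf_eq] at h
    rcases G.arcs_cover a with hA | ⟨j', k', hc | hc⟩
    · exact absurd (h ▸ (G.A0_ends a hA).2) (G.tailV_notin j k)
    · subst hc
      rw [G.tailA_t] at h
      cases k' with
      | zero => exact absurd (h ▸ G.tailV_root j') (G.tailV_notin j k)
      | succ m =>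
        obtain ⟨hj, hk⟩ := G.tailV_inj j' m j k h
        subst hj; subst hk
        exact Or.inl rfl
    · subst hc
      rw [G.t_bar, G.tailA_o] at h
      obtain ⟨hj, hk⟩ := G.tailV_inj j' k' j k h
      subst hj; subst hk
      exact Or.inr rfl
  · rintro (rfl | rfl)
    · exact G.tailA_t j (k+1)
    · show G.t _ = _
      rw [G.t_bar, G.tailA_o]

lemma tail_ne (j : Fin G.r) (k : ℕ) :
    G.tailA j (k+1) ≠ G.bar (G.tailA j k) := by
  intro h
  have ho : G.o (G.tailA j (k+1)) = G.o (G.bar (G.tailA j k)) := by rw [h]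
  rw [G.tailA_o, G.o_bar, G.tailA_t] at ho
  cases k with
  | zero => exact G.tailV_notin j 1 (ho ▸ G.tailV_root j)
  | succ m =>
    obtain ⟨_, hk⟩ := G.tailV_inj j (m+2) j m ho
    omega

end aux

lemma sqrt_half_sq : ((Real.sqrt (1/2) : ℝ) : ℂ) * ((Real.sqrt (1/2) : ℝ) : ℂ) = 1/2 := by
  norm_cast
  rw [Real.mul_self_sqrt (by norm_num)]
  norm_num

lemma tail_step (G : TailedGraph) (p : G.A → ℝ)
    (hp : TailTransition G p) (Ψ : G.A → ℂ)
    (hΨ : szegedy G.toSymDigraph p Ψ = Ψ) (j : Fin G.r) (k : ℕ) :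
    Ψ (G.tailA j k) = Ψ (G.tailA j (k+1)) ∧
      Ψ (G.bar (G.tailA j (k+1))) = Ψ (G.bar (G.tailA j k)) := by
  have hsum : (∑ᶠ b ∈ {b : G.A | G.t b = G.tailV j (k+1)},
      (Real.sqrt (p (G.bar b)) : ℂ) * Ψ b)
      = (Real.sqrt (1/2) : ℂ) * Ψ (G.tailA j (k+1))
        + (Real.sqrt (1/2) : ℂ) * Ψ (G.bar (G.tailA j k)) := by
    rw [tail_incoming G j k, finsum_mem_pair (tail_ne G j k)]
    rw [hp.2.2 j k, G.bar_inv, hp.2.1 j k]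
  constructor
  · have h1 := congrFun hΨ (G.tailA j k)
    rw [szegedy] at h1
    rw [G.tailA_o, hsum, hp.2.1 j k] at h1
    linear_combination (-1 : ℂ) * h1 + (2 * Ψ (G.tailA j (k+1)) + 2 * Ψ (G.bar (G.tailA j k))) * sqrt_half_sq
  · have h1 := congrFun hΨ (G.bar (G.tailA j (k+1)))
    rw [szegedy] at h1
    rw [G.o_bar, G.tailA_t, hsum, hp.2.2 j k, G.bar_inv] at h1
    linear_combination (-1 : ℂ) * h1 + (2 * Ψ (G.tailA j (k+1)) + 2 * Ψ (G.bar (G.tailA j k))) * sqrt_half_sq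

/-- any fixed point of `U` is constant on the inward arcs and
constant on the outward arcs of each tail. -/
theorem tail_values_constant (G : TailedGraph) (p : G.A → ℝ)
    (hp : TailTransition G p) (Ψ : G.A → ℂ)
    (hΨ : szegedy G.toSymDigraph p Ψ = Ψ) :
    ∀ j : Fin G.r, ∃ αj βj : ℂ,
      (∀ k : ℕ, Ψ (G.tailA j k) = αj) ∧
      ∀ k : ℕ, Ψ (G.bar (G.tailA j k)) = βj := by
  intro j
  refine ⟨Ψ (G.tailA j 0), Ψ (G.bar (G.tailA j 0)), ?_, ?_⟩
  · intro k
    induction k with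
    | zero => rfl
    | succ m ih => rw [← (tail_step G p hp Ψ hΨ j m).1, ih]
  · intro k
    induction k with
    | zero => rfl
    | succ m ih => rw [(tail_step G p hp Ψ hΨ j m).2, ih]
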